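/- Let k be a field, n a natural number, a : Fin n → ℤ weights with a i ≠ 0 for all i, and N ∈ ℤ with N > a i for every i. Let x : Fin n → k be a nonzero vector and (z₀, z₁) ∈ k × k a nonzero pair, and define the antidiagonal weight set Π_A(x, z₀, z₁) = {a i : x i ≠ 0 and z₀ ≠ 0} ∪ {a i − N : x i ≠ 0 and z₁ ≠ 0}. Then Π_A(x, z₀, z₁) fails to contain both a positive and a negative integer if and only if exactly one of the following three cases occurs: (i) z₀ = 0; (ii) z₁ = 0 and the set {a i : x i ≠ 0} consists entirely of positive integers or entirely of negative integers; (iii) z₀ ≠ 0, z₁ ≠ 0, and the set {a i : x i ≠ 0} consists entirely of negative integers. -/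

import Mathlib

/-!
Write `Π(x) = {a i : x i ≠ 0}`. Depending on which of `z₀, z₁` vanish, the antidiagonal weight
set is `Π(x) - N`, `Π(x)` or `Π(x) ∪ (Π(x) - N)`. Since `N` exceeds every weight, `Π(x) - N`
is entirely negative: in the first case there is no positive weight at all, and in the last the
negative weights are always present, so only a positive `a i` can make the point stable.
-/

/-- The stability criterion: a point is stable iff its weight set has this property. -/
def HasBothSigns {α : Type*} [Zero α] [LT α] (S : Set α) : Prop :=
  (∃ m ∈ S, 0 < m) ∧ ∃ m ∈ S, m < 0

def weightSupport {ι α k : Type*} [Zero k] (a : ι → α) (x : ι → k) : Set α :=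
  {m | ∃ i, x i ≠ 0 ∧ m = a i}

def antidiagonalWeights {ι k : Type*} [Zero k] (a : ι → ℤ) (N : ℤ) (x : ι → k) (z₀ z₁ : k) :
    Set ℤ :=
  {m | ∃ i, x i ≠ 0 ∧ z₀ ≠ 0 ∧ m = a i} ∪ {m | ∃ i, x i ≠ 0 ∧ z₁ ≠ 0 ∧ m = a i - N}

section Signs

variable {ι α k : Type*} [Zero k]

theorem HasBothSigns.mono [Zero α] [LT α] {S T : Set α} (h : HasBothSigns S) (hST : S ⊆ T) :
    HasBothSigns T :=
  ⟨h.1.imp fun _ ⟨hm, hpos⟩ => ⟨hST hm, hpos⟩, h.2.imp fun _ ⟨hm, hneg⟩ => ⟨hST hm, hneg⟩⟩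

theorem not_hasBothSigns_of_forall_neg [Zero α] [Preorder α] {S : Set α}
    (h : ∀ m ∈ S, m < 0) : ¬ HasBothSigns S :=
  fun ⟨⟨m, hm, hpos⟩, _⟩ => (h m hm).not_gt hpos

theorem not_hasBothSigns_weightSupport_iff [Zero α] [LinearOrder α] {a : ι → α} {x : ι → k}
    (ha : ∀ i, a i ≠ 0) :
    ¬ HasBothSigns (weightSupport a x) ↔
      (∀ i, x i ≠ 0 → 0 < a i) ∨ ∀ i, x i ≠ 0 → a i < 0 := by
  simp only [HasBothSigns, weightSupport, Set.mem_ofPred_eq]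
  constructor
  · intro h
    by_contra! hmixed
    obtain ⟨⟨i, hxi, hi⟩, ⟨j, hxj, hj⟩⟩ := hmixed
    exact h ⟨⟨a j, ⟨j, hxj, rfl⟩, lt_of_le_of_ne hj (ha j).symm⟩,
      ⟨a i, ⟨i, hxi, rfl⟩, lt_of_le_of_ne hi (ha i)⟩⟩
  · rintro (hpos | hneg) ⟨⟨_, ⟨i, hxi, rfl⟩, hi⟩, ⟨_, ⟨j, hxj, rfl⟩, hj⟩⟩
    · exact (hpos j hxj).not_gt hj
    · exact (hneg i hxi).not_gt hi

variable [AddCommGroup α] [LinearOrder α] [IsOrderedAddMonoid α] {a : ι → α} {x : ι → k}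

theorem weightSupport_sub_neg {N : α} (hN : ∀ i, a i < N) :
    ∀ m ∈ weightSupport (a · - N) x, m < 0 := by
  rintro _ ⟨i, -, rfl⟩
  exact sub_neg.mpr (hN i)

/-- Every `a i` with `x i ≠ 0` is paired with the negative weight `a i - N`. -/
theorem not_hasBothSigns_weightSupport_union_sub_iff {N : α} (hN : ∀ i, a i < N) :
    ¬ HasBothSigns (weightSupport a x ∪ weightSupport (a · - N) x) ↔
      ∀ i, x i ≠ 0 → a i ≤ 0 := by
  constructor
  · intro h i hxi
    by_contra! hi
    exact h ⟨⟨a i, Or.inl ⟨i, hxi, rfl⟩, hi⟩, ⟨a i - N, Or.inr ⟨i, hxi, rfl⟩, sub_neg.mpr (hN i)⟩⟩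
  · rintro hle ⟨⟨_, hm, hpos⟩, -⟩
    rcases hm with ⟨i, hxi, rfl⟩ | hm
    · exact (hle i hxi).not_gt hpos
    · exact (weightSupport_sub_neg hN _ hm).not_gt hpos

end Signs

section Antidiagonal

variable {ι k : Type*} [Zero k] {a : ι → ℤ} {N : ℤ} {x : ι → k} {z₀ z₁ : k}

theorem antidiagonalWeights_subset_of_left_eq_zero (h₀ : z₀ = 0) :
    antidiagonalWeights a N x z₀ z₁ ⊆ weightSupport (a · - N) x := by
  rintro _ (⟨i, -, h, -⟩ | ⟨i, hxi, -, rfl⟩)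
  · exact absurd h₀ h
  · exact ⟨i, hxi, rfl⟩

theorem antidiagonalWeights_of_right_eq_zero (h₀ : z₀ ≠ 0) (h₁ : z₁ = 0) :
    antidiagonalWeights a N x z₀ z₁ = weightSupport a x := by
  ext
  simp [antidiagonalWeights, weightSupport, h₀, h₁]

theorem antidiagonalWeights_of_ne_zero (h₀ : z₀ ≠ 0) (h₁ : z₁ ≠ 0) :
    antidiagonalWeights a N x z₀ z₁ = weightSupport a x ∪ weightSupport (a · - N) x := by
  ext
  simp [antidiagonalWeights, weightSupport, h₀, h₁]

end Antidiagonal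

theorem antidiagonal_unstable_projective_general (k : Type*) [Field k] (n : ℕ) (a : Fin n → ℤ)
    (ha : ∀ i, a i ≠ 0) (N : ℤ) (hN : ∀ i, a i < N)
    (x : Fin n → k) (z₀ z₁ : k) (hz : (z₀, z₁) ≠ (0, 0)) :
    (¬ ((∃ m ∈ ({m : ℤ | ∃ i, x i ≠ 0 ∧ z₀ ≠ 0 ∧ m = a i} ∪
          {m : ℤ | ∃ i, x i ≠ 0 ∧ z₁ ≠ 0 ∧ m = a i - N}), 0 < m) ∧
        (∃ m ∈ ({m : ℤ | ∃ i, x i ≠ 0 ∧ z₀ ≠ 0 ∧ m = a i} ∪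
          {m : ℤ | ∃ i, x i ≠ 0 ∧ z₁ ≠ 0 ∧ m = a i - N}), m < 0))) ↔
    ((z₀ = 0 ∧
        ¬ (z₁ = 0 ∧ ((∀ i, x i ≠ 0 → 0 < a i) ∨ (∀ i, x i ≠ 0 → a i < 0))) ∧
        ¬ (z₀ ≠ 0 ∧ z₁ ≠ 0 ∧ (∀ i, x i ≠ 0 → a i < 0))) ∨
     (¬ (z₀ = 0) ∧
        (z₁ = 0 ∧ ((∀ i, x i ≠ 0 → 0 < a i) ∨ (∀ i, x i ≠ 0 → a i < 0))) ∧
        ¬ (z₀ ≠ 0 ∧ z₁ ≠ 0 ∧ (∀ i, x i ≠ 0 → a i < 0))) ∨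
     (¬ (z₀ = 0) ∧
        ¬ (z₁ = 0 ∧ ((∀ i, x i ≠ 0 → 0 < a i) ∨ (∀ i, x i ≠ 0 → a i < 0))) ∧
        (z₀ ≠ 0 ∧ z₁ ≠ 0 ∧ (∀ i, x i ≠ 0 → a i < 0)))) := by
  change ¬ HasBothSigns (antidiagonalWeights a N x z₀ z₁) ↔ _
  by_cases h₀ : z₀ = 0 <;> by_cases h₁ : z₁ = 0
  · simp [h₀, h₁] at hz
  · have hunstable : ¬ HasBothSigns (antidiagonalWeights a N x z₀ z₁) := fun h =>
      not_hasBothSigns_of_forall_neg (weightSupport_sub_neg hN)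
        (h.mono (antidiagonalWeights_subset_of_left_eq_zero h₀))
    rw [iff_true_intro hunstable]
    simp [h₀, h₁]
  · rw [antidiagonalWeights_of_right_eq_zero h₀ h₁, not_hasBothSigns_weightSupport_iff ha]
    simp [h₀, h₁]
  · rw [antidiagonalWeights_of_ne_zero h₀ h₁, not_hasBothSigns_weightSupport_union_sub_iff hN]
    simp [h₀, h₁, fun i => (ha i).le_iff_lt]

/-- Classification of the unstable points of `X × ℙ¹` for the antidiagonal
torus: with weights `a i ≠ 0`, `N > a i` for all `i`, `x` a nonzero vector and `(z₀, z₁)` a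
nonzero pair, the antidiagonal weight set
`Π_A(x,z₀,z₁) = {a i : x i ≠ 0 ∧ z₀ ≠ 0} ∪ {a i - N : x i ≠ 0 ∧ z₁ ≠ 0}`
fails to contain both a positive and a negative integer if and only if exactly one of the
following occurs:
(i) `z₀ = 0`;
(ii) `z₁ = 0` and `{a i : x i ≠ 0}` consists entirely of positive or entirely of negative
integers;
(iii) `z₀ ≠ 0`, `z₁ ≠ 0`, and `{a i : x i ≠ 0}` consists entirely of negative integers. -/
theorem antidiagonal_unstable_projective (k : Type*) [Field k] (n : ℕ) (a : Fin n → ℤ)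
    (ha : ∀ i, a i ≠ 0) (N : ℤ) (hN : ∀ i, a i < N)
    (x : Fin n → k) (hx : x ≠ 0) (z₀ z₁ : k) (hz : (z₀, z₁) ≠ (0, 0)) :
    (¬ ((∃ m ∈ ({m : ℤ | ∃ i, x i ≠ 0 ∧ z₀ ≠ 0 ∧ m = a i} ∪
          {m : ℤ | ∃ i, x i ≠ 0 ∧ z₁ ≠ 0 ∧ m = a i - N}), 0 < m) ∧
        (∃ m ∈ ({m : ℤ | ∃ i, x i ≠ 0 ∧ z₀ ≠ 0 ∧ m = a i} ∪
          {m : ℤ | ∃ i, x i ≠ 0 ∧ z₁ ≠ 0 ∧ m = a i - N}), m < 0))) ↔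
    ((z₀ = 0 ∧
        ¬ (z₁ = 0 ∧ ((∀ i, x i ≠ 0 → 0 < a i) ∨ (∀ i, x i ≠ 0 → a i < 0))) ∧
        ¬ (z₀ ≠ 0 ∧ z₁ ≠ 0 ∧ (∀ i, x i ≠ 0 → a i < 0))) ∨
     (¬ (z₀ = 0) ∧
        (z₁ = 0 ∧ ((∀ i, x i ≠ 0 → 0 < a i) ∨ (∀ i, x i ≠ 0 → a i < 0))) ∧
        ¬ (z₀ ≠ 0 ∧ z₁ ≠ 0 ∧ (∀ i, x i ≠ 0 → a i < 0))) ∨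
     (¬ (z₀ = 0) ∧
        ¬ (z₁ = 0 ∧ ((∀ i, x i ≠ 0 → 0 < a i) ∨ (∀ i, x i ≠ 0 → a i < 0))) ∧
        (z₀ ≠ 0 ∧ z₁ ≠ 0 ∧ (∀ i, x i ≠ 0 → a i < 0)))) :=
  antidiagonal_unstable_projective_general k n a ha N hN x z₀ z₁ hz
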